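/- Assume T > 1 and that for a window index c the shift relation holds: x_z^{(c,T)} = x_{z-1}^{(c,0)} for all z, and x_z^{(c,t+1)} ≤ x_z^{(c,t)} for all z and t ∈ {0,…,T−1}. Let α ∈ [1,2] be such that α·(U(x^{(c,t+1)};ε,c) − U(x^{(c,t)};ε,c)) ≤ −∑_{z=c}^{c+W−1} ρ'(1−x_z^{(c,t)})·(x_z^{(c,t+1)} − x_z^{(c,t)})² for all t ∈ {0,…,T−1}. Then, summing over t and applying Jensen's inequality to the step sizes l_t = x_z^{(c,t)} − x_z^{(c,t+1)} (which are nonnegative and sum over t to x_z^{(c,0)} − x_{z−1}^{(c,0)}), together with ρ'(1−x_z^{(c,t)}) ≥ ρ'(1−x_z^{(c,0)}), one obtains α·(U(x^{(c,0)};ε,c) − U(x^{(c,T)};ε,c)) ≥ (1/T)·∑_{z=c}^{c+W−1} ρ'(1−x_z^{(c,0)})·(x_z^{(c,0)} − x_{z−1}^{(c,0)})². -/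

import Mathlib

/-!
Summing the per-iteration descent inequality over `t` telescopes the potential:
`α (U(x^{(c,0)}) − U(x^{(c,T)}))` dominates
`∑ₜ ∑_z ρ'(1 − x_z^{(c,t)}) (x_z^{(c,t+1)} − x_z^{(c,t)})²`. Lowering each weight to
`ρ'(1 − x_z^{(c,0)})` and applying Cauchy–Schwarz to the `T` steps at position `z`, which telescope
to `x_z^{(c,0)} − x_z^{(c,T)} = x_z^{(c,0)} − x_{z−1}^{(c,0)}`, gives the bound.
Cauchy–Schwarz may only be multiplied by a nonnegative weight, so `x_z^{(c,0)} ≤ 1` is needed: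
the density-evolution update keeps profiles `[0,1]`-valued, since `λ`, `ρ` and the `ε_z` map
into `[0,1]`.
-/

open Finset

noncomputable section

namespace SC

/-- λ(x) = L'(x)/L'(1). -/
def lam (L : Polynomial ℝ) (x : ℝ) : ℝ :=
  (Polynomial.derivative L).eval x / (Polynomial.derivative L).eval 1

/-- ρ(x) = R'(x)/R'(1). -/
def rho (R : Polynomial ℝ) (x : ℝ) : ℝ :=
  (Polynomial.derivative R).eval x / (Polynomial.derivative R).eval 1

/-- ρ'(x) = R''(x)/R'(1). -/
def rhoD (R : Polynomial ℝ) (x : ℝ) : ℝ :=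
  (Polynomial.derivative (Polynomial.derivative R)).eval x / (Polynomial.derivative R).eval 1

/-- ε_z = ε for 1 ≤ z ≤ N, 0 otherwise. -/
def epsAt (ε : ℝ) (N : ℕ) (z : ℤ) : ℝ := if 1 ≤ z ∧ z ≤ (N : ℤ) then ε else 0

/-- Windowed DE update f(z, x; c, w, W, ε). -/
def deUpdate (L R : Polynomial ℝ) (ε : ℝ) (N w W : ℕ) (c : ℤ) (x : ℤ → ℝ) (z : ℤ) : ℝ :=
  if c ≤ z ∧ z ≤ c + (W : ℤ) - 1 then
    (1 / (w : ℝ)) * ∑ k ∈ Finset.range w, epsAt ε N (z - (k : ℤ)) *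
      lam L (1 - (1 / (w : ℝ)) * ∑ j ∈ Finset.range w, rho R (1 - x (z + (j : ℤ) - (k : ℤ))))
  else x z

/-- Window potential U(x; ε, c). -/
def windowU (L R : Polynomial ℝ) (ε : ℝ) (w W : ℕ) (c : ℤ) (x : ℤ → ℝ) : ℝ :=
  ∑ z ∈ Finset.Icc (c - ((w : ℤ) - 1)) (c + (W : ℤ) - 1),
    ((1 / (Polynomial.derivative R).eval 1) * (1 - R.eval (1 - x z))
      - x z * rho R (1 - x z)
      - (ε / (Polynomial.derivative L).eval 1) *
          L.eval (1 - (1 / (w : ℝ)) * ∑ j ∈ Finset.range w, rho R (1 - x (z + (j : ℤ)))))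

/-- Single-system potential U(x; ε). -/
def singleU (L R : Polynomial ℝ) (ε : ℝ) (x : ℝ) : ℝ :=
  (1 / (Polynomial.derivative R).eval 1) * (1 - R.eval (1 - x))
    - x * rho R (1 - x)
    - (ε / (Polynomial.derivative L).eval 1) * L.eval (1 - rho R (1 - x))

end SC

namespace Polynomial

variable {α : Type*} [CommSemiring α] [PartialOrder α] [IsOrderedRing α] {p : α[X]}

lemma eval_nonneg_of_coeff_nonneg (hp : ∀ i, 0 ≤ p.coeff i) {x : α} (hx : 0 ≤ x) :
    0 ≤ p.eval x := by
  rw [eval_eq_sum_range]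
  exact sum_nonneg fun i _ => mul_nonneg (hp i) (pow_nonneg hx i)

lemma eval_le_eval_of_coeff_nonneg (hp : ∀ i, 0 ≤ p.coeff i) {x y : α} (hx : 0 ≤ x)
    (hxy : x ≤ y) : p.eval x ≤ p.eval y := by
  rw [eval_eq_sum_range, eval_eq_sum_range]
  exact sum_le_sum fun i _ => mul_le_mul_of_nonneg_left (pow_le_pow_left₀ hx hxy i) (hp i)

lemma coeff_derivative_nonneg (hp : ∀ i, 0 ≤ p.coeff i) (i : ℕ) :
    0 ≤ (derivative p).coeff i := by
  rw [coeff_derivative]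
  exact mul_nonneg (hp _) (add_nonneg (Nat.cast_nonneg i) zero_le_one)

end Polynomial

lemma sq_sum_div_card_le_sum_sq {ι K : Type*} [Semifield K] [LinearOrder K]
    [IsStrictOrderedRing K] [ExistsAddOfLE K] (s : Finset ι) (f : ι → K) :
    (∑ i ∈ s, f i) ^ 2 / #s ≤ ∑ i ∈ s, f i ^ 2 := by
  obtain rfl | hs := s.eq_empty_or_nonempty
  · simp
  rw [div_le_iff₀' (by positivity)]
  exact sq_sum_le_card_mul_sum_sq

section Telescoping

variable {K : Type*} [Field K] [LinearOrder K] [IsStrictOrderedRing K]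

lemma sq_sub_div_le_sum_sq_sub (a : ℕ → K) (T : ℕ) :
    (a 0 - a T) ^ 2 / T ≤ ∑ t ∈ range T, (a (t + 1) - a t) ^ 2 :=
  calc (a 0 - a T) ^ 2 / T = (∑ t ∈ range T, (a t - a (t + 1))) ^ 2 / #(range T) := by
        rw [sum_range_sub', card_range]
    _ ≤ ∑ t ∈ range T, (a t - a (t + 1)) ^ 2 := sq_sum_div_card_le_sum_sq _ _
    _ = ∑ t ∈ range T, (a (t + 1) - a t) ^ 2 := sum_congr rfl fun t _ => sub_sq_comm _ _

lemma one_div_mul_sum_weighted_sq_sub_le {ι : Type*} (s : Finset ι) (T : ℕ)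
    (x ρ : ℕ → ι → K) (hρ₀ : ∀ z ∈ s, 0 ≤ ρ 0 z) (hρ : ∀ t < T, ∀ z ∈ s, ρ 0 z ≤ ρ t z) :
    1 / (T : K) * ∑ z ∈ s, ρ 0 z * (x 0 z - x T z) ^ 2 ≤
      ∑ t ∈ range T, ∑ z ∈ s, ρ t z * (x (t + 1) z - x t z) ^ 2 :=
  calc 1 / (T : K) * ∑ z ∈ s, ρ 0 z * (x 0 z - x T z) ^ 2
      = ∑ z ∈ s, ρ 0 z * ((x 0 z - x T z) ^ 2 / T) := by
        rw [mul_sum]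
        exact sum_congr rfl fun z _ => by ring
    _ ≤ ∑ z ∈ s, ρ 0 z * ∑ t ∈ range T, (x (t + 1) z - x t z) ^ 2 :=
        sum_le_sum fun z hz =>
          mul_le_mul_of_nonneg_left (sq_sub_div_le_sum_sq_sub (x · z) T) (hρ₀ z hz)
    _ = ∑ t ∈ range T, ∑ z ∈ s, ρ 0 z * (x (t + 1) z - x t z) ^ 2 := by
        simp only [mul_sum]
        exact sum_comm
    _ ≤ ∑ t ∈ range T, ∑ z ∈ s, ρ t z * (x (t + 1) z - x t z) ^ 2 :=
        sum_le_sum fun t ht => sum_le_sum fun z hz =>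
          mul_le_mul_of_nonneg_right (hρ t (mem_range.mp ht) z hz) (sq_nonneg _)

lemma sum_le_mul_sub_of_descent (u d : ℕ → K) (α : K) (T : ℕ)
    (h : ∀ t < T, α * (u (t + 1) - u t) ≤ -d t) :
    ∑ t ∈ range T, d t ≤ α * (u 0 - u T) := by
  rw [← sum_range_sub' u T, mul_sum]
  exact sum_le_sum fun t ht => by linarith [h t (mem_range.mp ht)]

end Telescoping

namespace SC

open Polynomial

lemma eval_div_eval_one_mem_Icc {p : ℝ[X]} (hp : ∀ i, 0 ≤ p.coeff i) {x : ℝ}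
    (hx : x ∈ Set.Icc 0 1) : p.eval x / p.eval 1 ∈ Set.Icc (0 : ℝ) 1 :=
  ⟨div_nonneg (eval_nonneg_of_coeff_nonneg hp hx.1) (eval_nonneg_of_coeff_nonneg hp zero_le_one),
    div_le_one_of_le₀ (eval_le_eval_of_coeff_nonneg hp hx.1 hx.2)
      (eval_nonneg_of_coeff_nonneg hp zero_le_one)⟩

lemma lam_mem_Icc {L : ℝ[X]} (hL : ∀ i, 0 ≤ L.coeff i) {y : ℝ} (hy : y ∈ Set.Icc 0 1) :
    lam L y ∈ Set.Icc (0 : ℝ) 1 :=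
  eval_div_eval_one_mem_Icc (coeff_derivative_nonneg hL) hy

lemma rho_mem_Icc {R : ℝ[X]} (hR : ∀ i, 0 ≤ R.coeff i) {y : ℝ} (hy : y ∈ Set.Icc 0 1) :
    rho R y ∈ Set.Icc (0 : ℝ) 1 :=
  eval_div_eval_one_mem_Icc (coeff_derivative_nonneg hR) hy

lemma rhoD_nonneg {R : ℝ[X]} (hR : ∀ i, 0 ≤ R.coeff i) {y : ℝ} (hy : 0 ≤ y) :
    0 ≤ rhoD R y :=
  have hR' := coeff_derivative_nonneg hR
  div_nonneg (eval_nonneg_of_coeff_nonneg (coeff_derivative_nonneg hR') hy)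
    (eval_nonneg_of_coeff_nonneg hR' zero_le_one)

lemma epsAt_mem_Icc {ε : ℝ} (hε : ε ∈ Set.Icc 0 1) (N : ℕ) (z : ℤ) :
    epsAt ε N z ∈ Set.Icc (0 : ℝ) 1 := by
  unfold epsAt
  split_ifs
  exacts [hε, ⟨le_rfl, zero_le_one⟩]

lemma one_div_mul_sum_range_mem_Icc {w : ℕ} {g : ℕ → ℝ} (hg : ∀ j < w, g j ∈ Set.Icc 0 1) :
    1 / (w : ℝ) * ∑ j ∈ range w, g j ∈ Set.Icc (0 : ℝ) 1 := by
  rcases Nat.eq_zero_or_pos w with rfl | hw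
  · simp
  have hsum_le : ∑ j ∈ range w, g j ≤ w := by
    simpa using sum_le_sum fun j hj => (hg j (mem_range.mp hj)).2
  refine ⟨mul_nonneg (by positivity) (sum_nonneg fun j hj => (hg j (mem_range.mp hj)).1), ?_⟩
  rw [one_div_mul_eq_div]
  exact div_le_one_of_le₀ hsum_le (Nat.cast_nonneg w)

lemma deUpdate_mem_Icc {L R : ℝ[X]} (hL : ∀ i, 0 ≤ L.coeff i) (hR : ∀ i, 0 ≤ R.coeff i)
    {ε : ℝ} (hε : ε ∈ Set.Icc 0 1) (N w W : ℕ) (c : ℤ) {x : ℤ → ℝ} (hx : ∀ z, x z ∈ Set.Icc 0 1)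
    (z : ℤ) : deUpdate L R ε N w W c x z ∈ Set.Icc (0 : ℝ) 1 := by
  unfold deUpdate
  split_ifs
  · refine one_div_mul_sum_range_mem_Icc fun k _ => ?_
    have hρavg := one_div_mul_sum_range_mem_Icc (w := w)
      (g := fun j => rho R (1 - x (z + j - k))) fun j _ =>
        rho_mem_Icc hR ⟨sub_nonneg.2 (hx _).2, sub_le_self _ (hx _).1⟩
    have hlam := lam_mem_Icc hL ⟨sub_nonneg.2 hρavg.2, sub_le_self _ hρavg.1⟩
    have heps := epsAt_mem_Icc hε N (z - k)
    exact ⟨mul_nonneg heps.1 hlam.1, mul_le_one₀ heps.2 hlam.1 hlam.2⟩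
  · exact hx z

lemma deIterate_mem_Icc {L R : ℝ[X]} (hL : ∀ i, 0 ≤ L.coeff i) (hR : ∀ i, 0 ≤ R.coeff i)
    {ε : ℝ} (hε : ε ∈ Set.Icc 0 1) {N w W T : ℕ} {c : ℤ} {Y : ℕ → ℤ → ℝ}
    (hout : ∀ t : ℕ, ∀ z : ℤ, ¬ (1 ≤ z ∧ z ≤ (N : ℤ) + (w : ℤ) - 1) → Y t z = 0)
    (hupd : ∀ t : ℕ, t + 1 ≤ T → ∀ z : ℤ, 1 ≤ z → z ≤ (N : ℤ) + (w : ℤ) - 1 →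
      Y (t + 1) z = deUpdate L R ε N w W c (Y t) z)
    (h0 : ∀ z, Y 0 z ∈ Set.Icc 0 1) : ∀ t ≤ T, ∀ z, Y t z ∈ Set.Icc (0 : ℝ) 1 := by
  intro t
  induction t with
  | zero => exact fun _ => h0
  | succ t ih =>
    intro ht z
    by_cases hz : 1 ≤ z ∧ z ≤ (N : ℤ) + (w : ℤ) - 1
    · rw [hupd t ht z hz.1 hz.2]
      exact deUpdate_mem_Icc hL hR hε N w W c (ih (by omega)) z
    · rw [hout _ z hz]
      exact ⟨le_rfl, zero_le_one⟩

lemma deSolution_mem_Icc {L R : ℝ[X]} (hL : ∀ i, 0 ≤ L.coeff i) (hR : ∀ i, 0 ≤ R.coeff i)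
    {ε : ℝ} (hε : ε ∈ Set.Icc 0 1) {N w W T : ℕ} {X : ℕ → ℕ → ℤ → ℝ}
    (hinit : ∀ z : ℤ, 1 ≤ z → z ≤ (N : ℤ) + (w : ℤ) - 1 → X 1 0 z = 1)
    (hout : ∀ c t : ℕ, ∀ z : ℤ, ¬ (1 ≤ z ∧ z ≤ (N : ℤ) + (w : ℤ) - 1) → X c t z = 0)
    (hupd : ∀ c : ℕ, 1 ≤ c → c + W ≤ N + 1 → ∀ t : ℕ, t + 1 ≤ T →
      ∀ z : ℤ, 1 ≤ z → z ≤ (N : ℤ) + (w : ℤ) - 1 →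
      X c (t + 1) z = deUpdate L R ε N w W (c : ℤ) (X c t) z)
    (hshiftwin : ∀ c : ℕ, 1 ≤ c → (c + 1) + W ≤ N + 1 → ∀ z : ℤ, X (c + 1) 0 z = X c T z)
    (c : ℕ) (hc1 : 1 ≤ c) (hc2 : c + W ≤ N + 1) :
    ∀ t ≤ T, ∀ z, X c t z ∈ Set.Icc (0 : ℝ) 1 := by
  induction c, hc1 using Nat.le_induction with
  | base =>
    refine deIterate_mem_Icc hL hR hε (hout 1) (hupd 1 le_rfl hc2) fun z => ?_
    by_cases hz : 1 ≤ z ∧ z ≤ (N : ℤ) + (w : ℤ) - 1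
    · rw [hinit z hz.1 hz.2]
      exact ⟨zero_le_one, le_rfl⟩
    · rw [hout 1 0 z hz]
      exact ⟨le_rfl, zero_le_one⟩
  | succ c hc ih =>
    refine deIterate_mem_Icc hL hR hε (hout (c + 1)) (hupd (c + 1) (by omega) hc2) fun z => ?_
    rw [hshiftwin c hc hc2 z]
    exact ih (by omega) T le_rfl z

theorem potential_drop_lower_bound_general
    (L R : Polynomial ℝ)
    (hLcoeff : ∀ i, 0 ≤ L.coeff i) (hRcoeff : ∀ i, 0 ≤ R.coeff i)
    (ε : ℝ) (hε0 : 0 ≤ ε) (hε1 : ε ≤ 1)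
    (N w W T : ℕ)
    -- the windowed-decoding DE solution
    (X : ℕ → ℕ → ℤ → ℝ)
    (hinit : ∀ z : ℤ, 1 ≤ z → z ≤ (N : ℤ) + (w : ℤ) - 1 → X 1 0 z = 1)
    (hout : ∀ c t : ℕ, ∀ z : ℤ, ¬ (1 ≤ z ∧ z ≤ (N : ℤ) + (w : ℤ) - 1) → X c t z = 0)
    (hupd : ∀ c : ℕ, 1 ≤ c → c + W ≤ N + 1 → ∀ t : ℕ, t + 1 ≤ T →
      ∀ z : ℤ, 1 ≤ z → z ≤ (N : ℤ) + (w : ℤ) - 1 →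
      X c (t + 1) z = deUpdate L R ε N w W (c : ℤ) (X c t) z)
    (hshiftwin : ∀ c : ℕ, 1 ≤ c → (c + 1) + W ≤ N + 1 → ∀ z : ℤ, X (c + 1) 0 z = X c T z)
    (c : ℕ) (hc1 : 1 ≤ c) (hc2 : c + W ≤ N + 1)
    (hshiftrel : ∀ z : ℤ, X c T z = X c 0 (z - 1))
    -- ρ'(1−x_z^{(c,t)}) ≥ ρ'(1−x_z^{(c,0)})
    (hrhoD : ∀ t : ℕ, t ≤ T → ∀ z : ℤ, (c : ℤ) ≤ z → z ≤ (c : ℤ) + (W : ℤ) - 1 →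
      rhoD R (1 - X c 0 z) ≤ rhoD R (1 - X c t z))
    -- per-iteration descent inequality with constant α ∈ [1,2]
    (α : ℝ)
    (hdesc : ∀ t : ℕ, t < T →
      α * (windowU L R ε w W (c : ℤ) (X c (t + 1)) - windowU L R ε w W (c : ℤ) (X c t)) ≤
        - ∑ z ∈ Finset.Icc (c : ℤ) ((c : ℤ) + (W : ℤ) - 1),
            rhoD R (1 - X c t z) * (X c (t + 1) z - X c t z) ^ 2) :
    α * (windowU L R ε w W (c : ℤ) (X c 0) - windowU L R ε w W (c : ℤ) (X c T)) ≥
      (1 / (T : ℝ)) * ∑ z ∈ Finset.Icc (c : ℤ) ((c : ℤ) + (W : ℤ) - 1),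
        rhoD R (1 - X c 0 z) * (X c 0 z - X c 0 (z - 1)) ^ 2 := by
  have hX₀ := deSolution_mem_Icc hLcoeff hRcoeff ⟨hε0, hε1⟩ hinit hout hupd hshiftwin c hc1 hc2
    0 (Nat.zero_le T)
  simp only [← hshiftrel]
  exact le_trans
    (one_div_mul_sum_weighted_sq_sub_le _ T (X c) (fun t z => rhoD R (1 - X c t z))
      (fun z _ => rhoD_nonneg hRcoeff (sub_nonneg.2 (hX₀ z).2))
      fun t ht z hz => hrhoD t ht.le z (Finset.mem_Icc.mp hz).1 (Finset.mem_Icc.mp hz).2)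
    (sum_le_mul_sub_of_descent (fun t => windowU L R ε w W c (X c t)) _ α T hdesc)

/-- key step in the proof of Theorem 1: summing the per-iteration descent
inequality over `t` and applying Jensen's inequality to the step sizes yields a lower bound on
the potential drop over one full window in terms of the initial gaps. -/
theorem potential_drop_lower_bound
    (L R : Polynomial ℝ)
    (hLcoeff : ∀ i, 0 ≤ L.coeff i) (hRcoeff : ∀ i, 0 ≤ R.coeff i)
    (hL1 : L.eval 1 = 1) (hR1 : R.eval 1 = 1)
    (hL'pos : 0 < (Polynomial.derivative L).eval 1)
    (hR'pos : 0 < (Polynomial.derivative R).eval 1)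
    (ε : ℝ) (hε0 : 0 ≤ ε) (hε1 : ε ≤ 1)
    (N w W T : ℕ) (hw : 1 ≤ w) (hwW : w ≤ W) (hWN : W ≤ N)
    -- the windowed-decoding DE solution
    (X : ℕ → ℕ → ℤ → ℝ)
    (hinit : ∀ z : ℤ, 1 ≤ z → z ≤ (N : ℤ) + (w : ℤ) - 1 → X 1 0 z = 1)
    (hout : ∀ c t : ℕ, ∀ z : ℤ, ¬ (1 ≤ z ∧ z ≤ (N : ℤ) + (w : ℤ) - 1) → X c t z = 0)
    (hupd : ∀ c : ℕ, 1 ≤ c → c + W ≤ N + 1 → ∀ t : ℕ, t + 1 ≤ T →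
      ∀ z : ℤ, 1 ≤ z → z ≤ (N : ℤ) + (w : ℤ) - 1 →
      X c (t + 1) z = deUpdate L R ε N w W (c : ℤ) (X c t) z)
    (hshiftwin : ∀ c : ℕ, 1 ≤ c → (c + 1) + W ≤ N + 1 → ∀ z : ℤ, X (c + 1) 0 z = X c T z)
    -- T > 1 and a window index c with the shift relation and monotonicity in t
    (hT : 1 < T)
    (c : ℕ) (hc1 : 1 ≤ c) (hc2 : c + W ≤ N + 1)
    (hshiftrel : ∀ z : ℤ, X c T z = X c 0 (z - 1))
    (hmonoT : ∀ t : ℕ, t < T → ∀ z : ℤ, X c (t + 1) z ≤ X c t z)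
    -- ρ'(1−x_z^{(c,t)}) ≥ ρ'(1−x_z^{(c,0)})
    (hrhoD : ∀ t : ℕ, t ≤ T → ∀ z : ℤ, (c : ℤ) ≤ z → z ≤ (c : ℤ) + (W : ℤ) - 1 →
      rhoD R (1 - X c 0 z) ≤ rhoD R (1 - X c t z))
    -- per-iteration descent inequality with constant α ∈ [1,2]
    (α : ℝ) (hα1 : 1 ≤ α) (hα2 : α ≤ 2)
    (hdesc : ∀ t : ℕ, t < T →
      α * (windowU L R ε w W (c : ℤ) (X c (t + 1)) - windowU L R ε w W (c : ℤ) (X c t)) ≤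
        - ∑ z ∈ Finset.Icc (c : ℤ) ((c : ℤ) + (W : ℤ) - 1),
            rhoD R (1 - X c t z) * (X c (t + 1) z - X c t z) ^ 2) :
    α * (windowU L R ε w W (c : ℤ) (X c 0) - windowU L R ε w W (c : ℤ) (X c T)) ≥
      (1 / (T : ℝ)) * ∑ z ∈ Finset.Icc (c : ℤ) ((c : ℤ) + (W : ℤ) - 1),
        rhoD R (1 - X c 0 z) * (X c 0 z - X c 0 (z - 1)) ^ 2 :=
  potential_drop_lower_bound_general L R hLcoeff hRcoeff ε hε0 hε1 N w W T X hinit hout hupd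
    hshiftwin c hc1 hc2 hshiftrel hrhoD α hdesc

end SC
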